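/- arXiv:1907.11338 — 8 statements merged into one kernel-verified Lean document; each statement's English description precedes it below -/
import Mathlib

section
/- Let z and w be integers with R ≤ z ≤ R + 2^r − 1 and R ≤ w ≤ R + 2^r − 1, and let Q be a real number with Q > 1/2 + Σ_{i=1}^k q_i. Then for any fixed strategy (w, w_0) of Player W, every maximizer (z, z_0, z_1, …, z_k) of Player Z's payoff Π_Z over Player Z's strategy set X_Z satisfies z = w. (The key inequality is z·(2w − z) = w² − (w − z)² ≤ w² − 1 whenever z ≠ w, so the term Q·z·(2w − z) dominates the remaining part of the payoff, which lies between 0 and 1/2 + Σ_{i=1}^k q_i.) -/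
open MeasureTheory

noncomputable section

/-- Player Z's strategy set `X_Z`: tuples `(z, z₀, (z₁,…,z_k))` with
`R ≤ z ≤ R + 2^r − 1`, each `zᵢ ∈ {0,1}`, and `(1/2)·z₀ + Σᵢ qᵢ·zᵢ ≤ z`. -/
def inXZ (k : ℕ) (q : Fin k → ℕ) (R r : ℕ) (s : ℤ × ℤ × (Fin k → ℤ)) : Prop :=
  (R : ℤ) ≤ s.1 ∧ s.1 ≤ (R : ℤ) + 2 ^ r - 1 ∧
  (s.2.1 = 0 ∨ s.2.1 = 1) ∧ (∀ i, s.2.2 i = 0 ∨ s.2.2 i = 1) ∧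
  (1 / 2 : ℝ) * (s.2.1 : ℝ) + ∑ i, (q i : ℝ) * (s.2.2 i : ℝ) ≤ (s.1 : ℝ)

/-- Player W's strategy set `X_W`: pairs `(w, w₀)` with `R ≤ w ≤ R + 2^r − 1`,
`w` an integer and `w₀` an arbitrary real number. -/
def inXW (R r : ℕ) (t : ℤ × ℝ) : Prop :=
  (R : ℤ) ≤ t.1 ∧ t.1 ≤ (R : ℤ) + 2 ^ r - 1

/-- Player Z's payoff `Π_Z = (1/2)·z₀ + Σᵢ qᵢ·zᵢ + Q·z·(2w − z)`. -/
def payZ (k : ℕ) (q : Fin k → ℕ) (Q : ℝ) (s : ℤ × ℤ × (Fin k → ℤ)) (t : ℤ × ℝ) : ℝ :=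
  (1 / 2 : ℝ) * (s.2.1 : ℝ) + ∑ i, (q i : ℝ) * (s.2.2 i : ℝ)
    + Q * (s.1 : ℝ) * (2 * (t.1 : ℝ) - (s.1 : ℝ))

/-- Player W's payoff `Π_W = (1 − z₀)·w₀`. -/
def payW (k : ℕ) (s : ℤ × ℤ × (Fin k → ℤ)) (t : ℤ × ℝ) : ℝ :=
  (1 - (s.2.1 : ℝ)) * t.2

/-
Playing `z = w` with all binary variables zero is feasible and earns `Q·w²`. Any strategy
with `z ≠ w` earns at most `1/2 + Σ qᵢ` from its linear part and, since
`z·(2w − z) = w² − (w − z)²` with `(w − z)² ≥ 1` for distinct integers, at most `Q·(w² − 1)`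
from the quadratic part; as `Q > 1/2 + Σ qᵢ`, that is strictly less than `Q·w²`.
-/

theorem Int.mul_two_mul_sub_le_sq_sub_one {z w : ℤ} (h : z ≠ w) :
    (z : ℝ) * (2 * w - z) ≤ (w : ℝ) ^ 2 - 1 := by
  have hsq : (1 : ℤ) ≤ (w - z) ^ 2 :=
    (one_le_sq_iff_one_le_abs _).2 (Int.one_le_abs (sub_ne_zero.2 h.symm))
  have hsqR : (1 : ℝ) ≤ ((w : ℝ) - z) ^ 2 := by exact_mod_cast hsq
  nlinarith

theorem Finset.sum_mul_le_sum_of_zero_or_one {ι : Type*} (s : Finset ι) {c : ι → ℝ} {x : ι → ℤ}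
    (hc : ∀ i ∈ s, 0 ≤ c i) (hx : ∀ i ∈ s, x i = 0 ∨ x i = 1) :
    ∑ i ∈ s, c i * x i ≤ ∑ i ∈ s, c i := by
  refine Finset.sum_le_sum fun i hi => ?_
  rcases hx i hi with h | h <;> simp [h, hc i hi]

theorem inXZ_of_inXW {k : ℕ} {q : Fin k → ℕ} {R r : ℕ} {t : ℤ × ℝ} (ht : inXW R r t) :
    inXZ k q R r (t.1, 0, fun _ => 0) := by
  refine ⟨ht.1, ht.2, Or.inl rfl, fun _ => Or.inl rfl, ?_⟩
  have hw : (R : ℝ) ≤ t.1 := by exact_mod_cast ht.1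
  simp only [Int.cast_zero, mul_zero, Finset.sum_const_zero, add_zero]
  linarith [R.cast_nonneg (α := ℝ)]

theorem payZ_diag (k : ℕ) (q : Fin k → ℕ) (Q : ℝ) (t : ℤ × ℝ) :
    payZ k q Q (t.1, 0, fun _ => 0) t = Q * (t.1 : ℝ) ^ 2 := by
  simp only [payZ, Int.cast_zero, mul_zero, Finset.sum_const_zero, zero_add]
  ring

theorem payZ_lt_of_ne {k : ℕ} {q : Fin k → ℕ} {R r : ℕ} {Q : ℝ}
    (hQ : Q > 1 / 2 + ∑ i, (q i : ℝ)) {s : ℤ × ℤ × (Fin k → ℤ)} (hs : inXZ k q R r s)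
    {t : ℤ × ℝ} (hne : s.1 ≠ t.1) :
    payZ k q Q s t < Q * (t.1 : ℝ) ^ 2 := by
  obtain ⟨-, -, hz₀, hz, -⟩ := hs
  have hz₀_le : (s.2.1 : ℝ) ≤ 1 := by rcases hz₀ with h | h <;> simp [h]
  have hsum := Finset.univ.sum_mul_le_sum_of_zero_or_one (c := fun i => (q i : ℝ))
    (fun i _ => (q i).cast_nonneg) (fun i _ => hz i)
  have hQ₀ : 0 < Q := by
    linarith [Finset.sum_nonneg fun i (_ : i ∈ Finset.univ) => (q i).cast_nonneg (α := ℝ)]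
  have hquad := mul_le_mul_of_nonneg_left (Int.mul_two_mul_sub_le_sq_sub_one hne) hQ₀.le
  simp only [payZ]
  nlinarith

theorem stmt0_general (k : ℕ) (q : Fin k → ℕ) (R r : ℕ) (Q : ℝ)
    (hQ : Q > 1 / 2 + ∑ i, (q i : ℝ))
    (t : ℤ × ℝ) (ht : inXW R r t)
    (s : ℤ × ℤ × (Fin k → ℤ)) (hs : inXZ k q R r s)
    (hmax : ∀ s' : ℤ × ℤ × (Fin k → ℤ), inXZ k q R r s' →
      payZ k q Q s' t ≤ payZ k q Q s t) :
    s.1 = t.1 := by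
  by_contra hne
  have hdiag := hmax _ (inXZ_of_inXW ht)
  rw [payZ_diag] at hdiag
  exact (payZ_lt_of_ne hQ hs hne).not_ge hdiag

/-- for a fixed strategy `(w, w₀) ∈ X_W` of Player W, if
`Q > 1/2 + Σᵢ qᵢ`, every maximizer of Player Z's payoff over `X_Z` has `z = w`. -/
theorem stmt0 (k : ℕ) (q : Fin k → ℕ) (R r : ℕ) (Q : ℝ)
    (hq : ∀ i, 0 < q i) (hR : 0 < R) (hr : 0 < r) (hrk : r ≤ k)
    (hQ : Q > 1 / 2 + ∑ i, (q i : ℝ))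
    (t : ℤ × ℝ) (ht : inXW R r t)
    (s : ℤ × ℤ × (Fin k → ℤ)) (hs : inXZ k q R r s)
    (hmax : ∀ s' : ℤ × ℤ × (Fin k → ℤ), inXZ k q R r s' →
      payZ k q Q s' t ≤ payZ k q Q s t) :
    s.1 = t.1 :=
  stmt0_general k q R r Q hQ t ht s hs hmax
end
end

section
/- Let Q be a real number with Q > 1/2 + Σ_{i=1}^k q_i, and let (w, w_0) be a fixed strategy of Player W. If there exists a subset I ⊆ {1, …, k} with Σ_{i∈I} q_i = w, then every maximizer (z, z_0, z_1, …, z_k) of Player Z's payoff Π_Z over X_Z satisfies z_0 = 0 (and moreover z = w and Σ_{i=1}^k q_i·z_i = w). -/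
open MeasureTheory

noncomputable section

/-!
Completing the square, `Π_Z = V + Q·w² − Q·(z − w)²` with `V = z₀/2 + Σ qᵢ zᵢ`, and the constraint
of `X_Z` gives `V ≤ z`, while `V ≤ 1/2 + Σ qᵢ < Q` always. The strategy `(w, 0, 1_I)` attains
`w + Q·w²`, so a maximizer has `V − Q·(z − w)² ≥ w ≥ 0`, which forces `z = w` because `V < Q`.
Then `w ≤ V ≤ z = w`, and `z₀/2 = w − Σ qᵢ zᵢ` being an integer forces `z₀ = 0`.
-/

open Finset

def valueZ (k : ℕ) (q : Fin k → ℕ) (s : ℤ × ℤ × (Fin k → ℤ)) : ℝ :=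
  (1 / 2 : ℝ) * (s.2.1 : ℝ) + ∑ i, (q i : ℝ) * (s.2.2 i : ℝ)

def indicatorStrategy {k : ℕ} (w : ℤ) (I : Finset (Fin k)) : ℤ × ℤ × (Fin k → ℤ) :=
  (w, 0, fun i => if i ∈ I then 1 else 0)

section

variable {k : ℕ} {q : Fin k → ℕ} {R r : ℕ}

lemma valueZ_le_of_inXZ {s : ℤ × ℤ × (Fin k → ℤ)} (hs : inXZ k q R r s) : valueZ k q s ≤ s.1 :=
  hs.2.2.2.2

lemma valueZ_le_half_add_sum {s : ℤ × ℤ × (Fin k → ℤ)} (hs : inXZ k q R r s) :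
    valueZ k q s ≤ 1 / 2 + ∑ i, (q i : ℝ) := by
  obtain ⟨-, -, hz₀, hz, -⟩ := hs
  have h₀ : (1 / 2 : ℝ) * s.2.1 ≤ 1 / 2 := by rcases hz₀ with h | h <;> simp [h]
  have hsum : ∑ i, (q i : ℝ) * s.2.2 i ≤ ∑ i, (q i : ℝ) :=
    sum_le_sum fun i _ => by rcases hz i with h | h <;> simp [h]
  unfold valueZ
  linarith

lemma valueZ_indicatorStrategy (w : ℤ) (I : Finset (Fin k)) :
    valueZ k q (indicatorStrategy w I) = ((∑ i ∈ I, (q i : ℤ) : ℤ) : ℝ) := by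
  simp [valueZ, indicatorStrategy, mul_ite, sum_ite_mem]

lemma inXZ_indicatorStrategy {t : ℤ × ℝ} (ht : inXW R r t) {I : Finset (Fin k)}
    (hI : ∑ i ∈ I, (q i : ℤ) = t.1) :
    inXZ k q R r (indicatorStrategy t.1 I) := by
  refine ⟨ht.1, ht.2, Or.inl rfl,
    fun i => by by_cases h : i ∈ I <;> simp [indicatorStrategy, h], ?_⟩
  have := valueZ_indicatorStrategy (q := q) t.1 I
  rw [valueZ, hI] at this
  exact this.le

end

lemma payZ_eq_valueZ_sub (k : ℕ) (q : Fin k → ℕ) (Q : ℝ) (s : ℤ × ℤ × (Fin k → ℤ))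
    (t : ℤ × ℝ) :
    payZ k q Q s t = valueZ k q s + Q * (t.1 : ℝ) ^ 2 - Q * ((s.1 : ℝ) - t.1) ^ 2 := by
  unfold payZ valueZ
  ring

lemma payZ_indicatorStrategy {k : ℕ} (q : Fin k → ℕ) (Q : ℝ) (t : ℤ × ℝ) {I : Finset (Fin k)}
    (hI : ∑ i ∈ I, (q i : ℤ) = t.1) :
    payZ k q Q (indicatorStrategy t.1 I) t = t.1 + Q * (t.1 : ℝ) ^ 2 := by
  rw [payZ_eq_valueZ_sub, valueZ_indicatorStrategy, hI]
  simp [indicatorStrategy]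

lemma int_eq_of_add_mul_sq_le {a Q : ℝ} {z w : ℤ} (hw : 0 ≤ w) (hQ : 0 ≤ Q) (haQ : a < Q)
    (h : w + Q * ((z : ℝ) - w) ^ 2 ≤ a) : z = w := by
  by_contra hne
  have hsq : (1 : ℝ) ≤ ((z : ℝ) - w) ^ 2 := by
    have : (1 : ℤ) ≤ (z - w) ^ 2 := by
      nlinarith [Int.one_le_abs (sub_ne_zero.mpr hne), sq_abs (z - w)]
    exact_mod_cast this
  have : (0 : ℝ) ≤ w := by exact_mod_cast hw
  nlinarith

lemma eq_zero_of_half_add_intCast_eq {z₀ S w : ℤ} (hz₀ : z₀ = 0 ∨ z₀ = 1)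
    (h : (1 / 2 : ℝ) * z₀ + S = w) : z₀ = 0 ∧ S = w := by
  have h2 : ((z₀ + 2 * S : ℤ) : ℝ) = ((2 * w : ℤ) : ℝ) := by push_cast; linarith
  have := Int.cast_injective h2
  omega

theorem stmt1_general (k : ℕ) (q : Fin k → ℕ) (R r : ℕ) (Q : ℝ)
    (hQ : Q > 1 / 2 + ∑ i, (q i : ℝ))
    (t : ℤ × ℝ) (ht : inXW R r t)
    (hI : ∃ I : Finset (Fin k), (∑ i ∈ I, (q i : ℤ)) = t.1)
    (s : ℤ × ℤ × (Fin k → ℤ)) (hs : inXZ k q R r s)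
    (hmax : ∀ s' : ℤ × ℤ × (Fin k → ℤ), inXZ k q R r s' →
      payZ k q Q s' t ≤ payZ k q Q s t) :
    s.2.1 = 0 ∧ s.1 = t.1 ∧ (∑ i, (q i : ℤ) * s.2.2 i) = t.1 := by
  obtain ⟨I, hIw⟩ := hI
  have hw : 0 ≤ t.1 := hIw ▸ sum_nonneg fun i _ => by positivity
  have hQ₀ : 0 ≤ Q := by
    have : (0 : ℝ) ≤ ∑ i, (q i : ℝ) := sum_nonneg fun i _ => by positivity
    linarith
  have hcand := hmax _ (inXZ_indicatorStrategy ht hIw)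
  rw [payZ_indicatorStrategy q Q t hIw, payZ_eq_valueZ_sub] at hcand
  have hzw : s.1 = t.1 :=
    int_eq_of_add_mul_sq_le hw hQ₀ ((valueZ_le_half_add_sum hs).trans_lt hQ) (by linarith)
  have hval : valueZ k q s = t.1 :=
    le_antisymm (hzw ▸ valueZ_le_of_inXZ hs) (by rw [hzw, sub_self] at hcand; linarith)
  obtain ⟨hz₀, hsum⟩ := eq_zero_of_half_add_intCast_eq (S := ∑ i, (q i : ℤ) * s.2.2 i)
    hs.2.2.1 (by rw [← hval, valueZ]; push_cast; rfl)
  exact ⟨hz₀, hzw, hsum⟩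

/-- if some subset of the `qᵢ` sums to `w`, every maximizer of
Player Z's payoff over `X_Z` has `z₀ = 0`, `z = w` and `Σᵢ qᵢ·zᵢ = w`. -/
theorem stmt1 (k : ℕ) (q : Fin k → ℕ) (R r : ℕ) (Q : ℝ)
    (hq : ∀ i, 0 < q i) (hR : 0 < R) (hr : 0 < r) (hrk : r ≤ k)
    (hQ : Q > 1 / 2 + ∑ i, (q i : ℝ))
    (t : ℤ × ℝ) (ht : inXW R r t)
    (hI : ∃ I : Finset (Fin k), (∑ i ∈ I, (q i : ℤ)) = t.1)
    (s : ℤ × ℤ × (Fin k → ℤ)) (hs : inXZ k q R r s)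
    (hmax : ∀ s' : ℤ × ℤ × (Fin k → ℤ), inXZ k q R r s' →
      payZ k q Q s' t ≤ payZ k q Q s t) :
    s.2.1 = 0 ∧ s.1 = t.1 ∧ (∑ i, (q i : ℤ) * s.2.2 i) = t.1 :=
  stmt1_general k q R r Q hQ t ht hI s hs hmax
end
end

section
/- Let Q be a real number with Q > 1/2 + Σ_{i=1}^k q_i, and let (w, w_0) be a fixed strategy of Player W. If no subset I ⊆ {1, …, k} satisfies Σ_{i∈I} q_i = w, then every maximizer (z, z_0, z_1, …, z_k) of Player Z's payoff Π_Z over X_Z satisfies z_0 = 1. (Since every subset sum that is at most w is in fact at most w − 1, setting z_0 = 1 remains feasible and strictly increases the payoff.) -/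
open MeasureTheory

noncomputable section

def linZ {k : ℕ} (q : Fin k → ℕ) (s : ℤ × ℤ × (Fin k → ℤ)) : ℝ :=
  (1 / 2 : ℝ) * (s.2.1 : ℝ) + ∑ i, (q i : ℝ) * (s.2.2 i : ℝ)

lemma Finset.sum_mul_eq_sum_filter_of_binary {ι : Type*} [Fintype ι] (q : ι → ℕ) {x : ι → ℤ}
    (hx : ∀ i, x i = 0 ∨ x i = 1) :
    ∑ i, (q i : ℝ) * (x i : ℝ) = ((∑ i ∈ Finset.univ.filter (x · = 1), (q i : ℤ) : ℤ) : ℝ) := by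
  push_cast
  rw [Finset.sum_filter]
  refine Finset.sum_congr rfl fun i _ => ?_
  rcases hx i with h | h <;> simp [h]

lemma Int.eq_of_sq_sub_lt_one {a b : ℤ} (h : ((a : ℝ) - b) ^ 2 < 1) : a = b := by
  have h' : (a - b) ^ 2 < 1 := by exact_mod_cast h
  nlinarith [sq_nonneg (a - b)]

section StrategyZ

variable {k : ℕ} {q : Fin k → ℕ} {R r : ℕ} {s : ℤ × ℤ × (Fin k → ℤ)}

lemma linZ_le (hs : inXZ k q R r s) : linZ q s ≤ 1 / 2 + ∑ i, (q i : ℝ) := by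
  obtain ⟨-, -, hz₀, hz, -⟩ := hs
  have h₀ : (s.2.1 : ℝ) ≤ 1 := by rcases hz₀ with h | h <;> simp [h]
  have hsum : ∑ i, (q i : ℝ) * (s.2.2 i : ℝ) ≤ ∑ i, (q i : ℝ) :=
    Finset.sum_le_sum fun i _ => by rcases hz i with h | h <;> simp [h]
  unfold linZ
  linarith

lemma payZ_eq (Q : ℝ) (s : ℤ × ℤ × (Fin k → ℤ)) (t : ℤ × ℝ) :
    payZ k q Q s t = linZ q s + Q * (t.1 : ℝ) ^ 2 - Q * ((t.1 : ℝ) - s.1) ^ 2 := by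
  unfold payZ linZ
  ring

/-- Playing `z = w` with nothing else set earns `Q w²`, which the quadratic penalty
`Q (w - z)²` of any `z ≠ w` cannot make up for, since the linear part is below `Q`. -/
lemma fst_eq_of_isMax {Q : ℝ} (hQ : Q > 1 / 2 + ∑ i, (q i : ℝ)) {t : ℤ × ℝ}
    (ht : inXW R r t) (hs : inXZ k q R r s)
    (hmax : ∀ s', inXZ k q R r s' → payZ k q Q s' t ≤ payZ k q Q s t) :
    s.1 = t.1 := by
  have hw : (0 : ℝ) ≤ t.1 := by exact_mod_cast (Int.natCast_nonneg R).trans ht.1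
  have hfeas : inXZ k q R r (t.1, 0, fun _ => 0) :=
    ⟨ht.1, ht.2, Or.inl rfl, fun _ => Or.inl rfl, by simpa using hw⟩
  have hcmp := hmax _ hfeas
  have hlin : linZ q (t.1, 0, fun _ => 0) = 0 := by simp [linZ]
  rw [payZ_eq, payZ_eq, hlin, sub_self] at hcmp
  have hL := linZ_le hs
  have hQ₀ : 0 < Q := by
    have : (0 : ℝ) ≤ ∑ i, (q i : ℝ) := Finset.sum_nonneg fun i _ => by positivity
    linarith
  have hpen : Q * ((t.1 : ℝ) - s.1) ^ 2 < Q * 1 := by linarith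
  exact (Int.eq_of_sq_sub_lt_one (lt_of_mul_lt_mul_left hpen hQ₀.le)).symm

lemma inXZ_z₀_one (hs : inXZ k q R r s)
    (hI : ¬ ∃ I : Finset (Fin k), (∑ i ∈ I, (q i : ℤ)) = s.1) :
    inXZ k q R r (s.1, 1, s.2.2) := by
  obtain ⟨hz₁, hz₂, hz₀, hz, hcon⟩ := hs
  set I := Finset.univ.filter (s.2.2 · = 1)
  have hsum := Finset.sum_mul_eq_sum_filter_of_binary q hz
  have h₀ : (0 : ℝ) ≤ s.2.1 := by rcases hz₀ with h | h <;> simp [h]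
  have hle : ∑ i ∈ I, (q i : ℤ) ≤ s.1 := by
    have : ((∑ i ∈ I, (q i : ℤ) : ℤ) : ℝ) ≤ s.1 := by linarith
    exact_mod_cast this
  -- an integer subset sum that misses `z` leaves a gap of at least `1 > 1/2`
  have hle' : ((∑ i ∈ I, (q i : ℤ) : ℤ) : ℝ) ≤ s.1 - 1 := by
    exact_mod_cast Int.le_sub_one_of_lt (lt_of_le_of_ne hle fun h => hI ⟨I, h⟩)
  refine ⟨hz₁, hz₂, Or.inr rfl, hz, ?_⟩
  simp only [hsum]
  push_cast at hle' ⊢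
  linarith

end StrategyZ

theorem stmt2_general (k : ℕ) (q : Fin k → ℕ) (R r : ℕ) (Q : ℝ)
    (hQ : Q > 1 / 2 + ∑ i, (q i : ℝ))
    (t : ℤ × ℝ) (ht : inXW R r t)
    (hI : ¬ ∃ I : Finset (Fin k), (∑ i ∈ I, (q i : ℤ)) = t.1)
    (s : ℤ × ℤ × (Fin k → ℤ)) (hs : inXZ k q R r s)
    (hmax : ∀ s' : ℤ × ℤ × (Fin k → ℤ), inXZ k q R r s' →
      payZ k q Q s' t ≤ payZ k q Q s t) :
    s.2.1 = 1 := by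
  have hzw := fst_eq_of_isMax hQ ht hs hmax
  have hfeas := inXZ_z₀_one hs (hzw ▸ hI)
  have hcmp : payZ k q Q (s.1, 1, s.2.2) t ≤ payZ k q Q s t := hmax _ hfeas
  simp only [payZ_eq, linZ] at hcmp
  rcases hs.2.2.1 with hz₀ | hz₀
  · rw [hz₀] at hcmp
    norm_num at hcmp
  · exact hz₀

/-- if no subset of the `qᵢ` sums to `w`, every maximizer of
Player Z's payoff over `X_Z` has `z₀ = 1`. -/
theorem stmt2 (k : ℕ) (q : Fin k → ℕ) (R r : ℕ) (Q : ℝ)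
    (hq : ∀ i, 0 < q i) (hR : 0 < R) (hr : 0 < r) (hrk : r ≤ k)
    (hQ : Q > 1 / 2 + ∑ i, (q i : ℝ))
    (t : ℤ × ℝ) (ht : inXW R r t)
    (hI : ¬ ∃ I : Finset (Fin k), (∑ i ∈ I, (q i : ℤ)) = t.1)
    (s : ℤ × ℤ × (Fin k → ℤ)) (hs : inXZ k q R r s)
    (hmax : ∀ s' : ℤ × ℤ × (Fin k → ℤ), inXZ k q R r s' →
      payZ k q Q s' t ≤ payZ k q Q s t) :
    s.2.1 = 1 :=
  stmt2_general k q R r Q hQ t ht hI s hs hmax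
end
end

section
/- For any real constant Q, in every pure Nash equilibrium ((z, z_0, z_1, …, z_k), (w, w_0)) of the game, Player Z's strategy satisfies z_0 = 1. (If z_0 = 0, then Player W's payoff Π_W = (1 − z_0)·w_0 = w_0 is unbounded above over X_W since w_0 ranges over all reals, so Player W has no best response.) -/
open MeasureTheory

noncomputable section

/-- A pure Nash equilibrium: each player's strategy is feasible and maximizes
that player's payoff over their own strategy set, the other strategy held fixed. -/
def pureNE (k : ℕ) (q : Fin k → ℕ) (R r : ℕ) (Q : ℝ)
    (s : ℤ × ℤ × (Fin k → ℤ)) (t : ℤ × ℝ) : Prop :=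
  inXZ k q R r s ∧ inXW R r t ∧
  (∀ s' : ℤ × ℤ × (Fin k → ℤ), inXZ k q R r s' → payZ k q Q s' t ≤ payZ k q Q s t) ∧
  (∀ t' : ℤ × ℝ, inXW R r t' → payW k s t' ≤ payW k s t)

theorem eq_zero_of_forall_mul_le {c y : ℝ} (h : ∀ x, c * x ≤ c * y) : c = 0 := by
  have hsq : c * c ≤ 0 := by linarith [h (y + c)]
  exact mul_self_eq_zero.mp (hsq.antisymm (mul_self_nonneg c))

theorem stmt3_general (k : ℕ) (q : Fin k → ℕ) (R r : ℕ) (Q : ℝ)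
    (s : ℤ × ℤ × (Fin k → ℤ)) (t : ℤ × ℝ)
    (hNE : pureNE k q R r Q s t) :
    s.2.1 = 1 := by
  obtain ⟨-, hW, -, hWbest⟩ := hNE
  have hcoeff : 1 - (s.2.1 : ℝ) = 0 :=
    eq_zero_of_forall_mul_le fun w₀ => hWbest (t.1, w₀) hW
  exact_mod_cast (sub_eq_zero.mp hcoeff).symm

/-- for any real `Q`, in every pure Nash equilibrium Player Z's
strategy satisfies `z₀ = 1`. -/
theorem stmt3 (k : ℕ) (q : Fin k → ℕ) (R r : ℕ) (Q : ℝ)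
    (hq : ∀ i, 0 < q i) (hR : 0 < R) (hr : 0 < r) (hrk : r ≤ k)
    (s : ℤ × ℤ × (Fin k → ℤ)) (t : ℤ × ℝ)
    (hNE : pureNE k q R r Q s t) :
    s.2.1 = 1 :=
  stmt3_general k q R r Q s t hNE
end
end

section
/- Let Q be a real number with Q > 1/2 + Σ_{i=1}^k q_i. If for every integer S with R ≤ S < R + 2^r there exists a subset I ⊆ {1, …, k} with Σ_{i∈I} q_i = S, then the game has no pure Nash equilibrium. (In any candidate equilibrium Player Z's best response to w has z = w and, since some subset sums to w, z_0 = 0; but then Player W's payoff w_0 is unbounded above, so W has no best response.) -/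
open MeasureTheory

noncomputable section

/-- if `Q > 1/2 + Σᵢ qᵢ` and every integer `S` with
`R ≤ S < R + 2^r` is a subset sum of the `qᵢ`, then the game has no pure
Nash equilibrium. -/
theorem stmt5 (k : ℕ) (q : Fin k → ℕ) (R r : ℕ) (Q : ℝ)
    (hq : ∀ i, 0 < q i) (hR : 0 < R) (hr : 0 < r) (hrk : r ≤ k)
    (hQ : Q > 1 / 2 + ∑ i, (q i : ℝ))
    (hS : ∀ S : ℤ, (R : ℤ) ≤ S → S < (R : ℤ) + 2 ^ r →
      ∃ I : Finset (Fin k), (∑ i ∈ I, (q i : ℤ)) = S) :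
    ¬ ∃ (s : ℤ × ℤ × (Fin k → ℤ)) (t : ℤ × ℝ), pureNE k q R r Q s t := by
  rintro ⟨⟨z, z0, zv⟩, ⟨w, w0⟩, hsZ, htW, hZopt, hWopt⟩
  obtain ⟨hz1, hz2, hz0, hzv, hfeas⟩ := hsZ
  obtain ⟨hw1, hw2⟩ := htW
  replace hz1 : (R : ℤ) ≤ z := hz1
  replace hz2 : z ≤ (R : ℤ) + 2 ^ r - 1 := hz2
  replace hz0 : z0 = 0 ∨ z0 = 1 := hz0
  replace hzv : ∀ i, zv i = 0 ∨ zv i = 1 := hzv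
  replace hfeas : (1 / 2 : ℝ) * (z0 : ℝ) + ∑ i, (q i : ℝ) * (zv i : ℝ) ≤ (z : ℝ) := hfeas
  replace hw1 : (R : ℤ) ≤ w := hw1
  replace hw2 : w ≤ (R : ℤ) + 2 ^ r - 1 := hw2
  -- z0 = 1
  have hz0' : z0 = 1 := by
    rcases hz0 with h0 | h1
    · exfalso
      have := hWopt (w, w0 + 1) ⟨hw1, hw2⟩
      simp only [payW, h0, Int.cast_zero, sub_zero, one_mul] at this
      linarith
    · exact h1
  -- subset summing to w
  obtain ⟨I, hI⟩ := hS w hw1 (by linarith)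
  set s' : ℤ × ℤ × (Fin k → ℤ) := (w, 0, fun i => if i ∈ I then 1 else 0) with hs'
  have hsum : ∑ i, (q i : ℝ) * (((if i ∈ I then (1:ℤ) else 0) : ℤ) : ℝ) = (w : ℝ) := by
    have : ∑ i, (q i : ℝ) * (((if i ∈ I then (1:ℤ) else 0) : ℤ) : ℝ)
        = ∑ i ∈ I, (q i : ℝ) := by
      simp only [apply_ite (Int.cast : ℤ → ℝ), Int.cast_one, Int.cast_zero, mul_ite,
        mul_one, mul_zero, Finset.sum_ite_mem, Finset.univ_inter]
    rw [this]
    exact_mod_cast congrArg (fun x : ℤ => (x : ℝ)) hI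
  have hfeas' : inXZ k q R r s' := by
    refine ⟨hw1, hw2, Or.inl rfl, fun i => by by_cases h : i ∈ I <;> simp [hs', h], ?_⟩
    simp only [hs']
    rw [hsum]
    norm_num
  have hle := hZopt s' hfeas'
  -- payoffs
  have hps' : payZ k q Q s' (w, w0) = (w : ℝ) + Q * (w : ℝ) ^ 2 := by
    simp only [payZ, hs']
    rw [hsum]
    ring_nf
  -- integer sum for zv
  have hn : ∑ i, (q i : ℝ) * (zv i : ℝ)
      = ((∑ i, (q i : ℤ) * zv i : ℤ) : ℝ) := by push_cast; ring
  set n : ℤ := ∑ i, (q i : ℤ) * zv i with hndef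
  have hps : payZ k q Q (z, z0, zv) (w, w0)
      = 1 / 2 + (n : ℝ) + Q * (z : ℝ) * (2 * (w : ℝ) - (z : ℝ)) := by
    simp only [payZ, hz0']
    rw [hn]
    push_cast
    ring
  rw [hps', hps] at hle
  have hQpos : 0 < Q := by
    have : (0:ℝ) ≤ ∑ i, (q i : ℝ) := Finset.sum_nonneg fun i _ => by positivity
    linarith
  have hnle : (n : ℝ) ≤ ∑ i, (q i : ℝ) := by
    rw [hndef]
    push_cast
    apply Finset.sum_le_sum
    intro i _
    rcases hzv i with h | h <;> simp [h]
  have hwpos : (1:ℝ) ≤ (w : ℝ) := by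
    have : (1:ℤ) ≤ w := by
      have : (1:ℤ) ≤ (R:ℤ) := by exact_mod_cast hR
      linarith
    exact_mod_cast this
  -- case split
  by_cases hzw : z = w
  · -- z = w : feasibility gives 1/2 + n ≤ w, and strictness by integrality
    have hfz : 1 / 2 + (n : ℝ) ≤ (z : ℝ) := by
      have := hfeas
      rw [hz0', hn] at this
      push_cast at this ⊢
      linarith
    have hlt : (n : ℤ) + 1 ≤ z := by
      by_contra h
      push_neg at h
      have : z ≤ n := by omega
      have : (z : ℝ) ≤ (n : ℝ) := by exact_mod_cast this
      linarith
    have : (n : ℝ) + 1 ≤ (z : ℝ) := by exact_mod_cast hlt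
    subst hzw
    nlinarith
  · -- z ≠ w : (w - z)^2 ≥ 1
    have h1 : (1:ℝ) ≤ ((w : ℝ) - (z : ℝ)) ^ 2 := by
      have : (1:ℤ) ≤ (w - z) ^ 2 := by
        rcases lt_or_gt_of_ne (fun h => hzw h.symm) with h | h
        · nlinarith
        · nlinarith
      calc (1:ℝ) ≤ (((w - z : ℤ) : ℝ)) ^ 2 := by exact_mod_cast this
        _ = ((w : ℝ) - (z : ℝ)) ^ 2 := by push_cast; ring
    nlinarith
end
end

section
/- Let Q be a real number with Q > 1/2 + Σ_{i=1}^k q_i, and suppose that for every integer S with R ≤ S < R + 2^r there exists a subset I ⊆ {1, …, k} with Σ_{i∈I} q_i = S. Then for every Borel probability measure σ_W on Player W's strategy set X_W, every maximizer (z, z_0, z_1, …, z_k) over X_Z of Player Z's expected payoff ∫ [(1/2)·z_0 + Σ_{i=1}^k q_i·z_i + Q·z·(2w − z)] dσ_W satisfies z_0 = 0. (The integral is well defined because w is bounded and the integrand does not involve w_0; whatever the optimal z is, some subset of the q_i sums exactly to z, so setting z_0 = 0 and choosing that subset strictly dominates any choice with z_0 = 1.) -/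
open MeasureTheory

noncomputable section

/-- if `Q > 1/2 + Σᵢ qᵢ` and every integer `S` with
`R ≤ S < R + 2^r` is a subset sum of the `qᵢ`, then against any mixed strategy
`σ_W` of Player W (supported on `X_W`), every maximizer over `X_Z` of Player
Z's expected payoff `∫ Π_Z dσ_W` has `z₀ = 0`. -/
theorem stmt7 (k : ℕ) (q : Fin k → ℕ) (R r : ℕ) (Q : ℝ)
    (hq : ∀ i, 0 < q i) (hR : 0 < R) (hr : 0 < r) (hrk : r ≤ k)
    (hQ : Q > 1 / 2 + ∑ i, (q i : ℝ))
    (hS : ∀ S : ℤ, (R : ℤ) ≤ S → S < (R : ℤ) + 2 ^ r →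
      ∃ I : Finset (Fin k), (∑ i ∈ I, (q i : ℤ)) = S)
    (σW : Measure (ℤ × ℝ)) [IsProbabilityMeasure σW]
    (hsupp : σW {t | inXW R r t} = 1)
    (s : ℤ × ℤ × (Fin k → ℤ)) (hs : inXZ k q R r s)
    (hmax : ∀ s' : ℤ × ℤ × (Fin k → ℤ), inXZ k q R r s' →
      (∫ t, payZ k q Q s' t ∂σW) ≤ ∫ t, payZ k q Q s t ∂σW) :
    s.2.1 = 0 := by
  obtain ⟨h1, h2, h3, h4, h5⟩ := hs
  rcases h3 with h3 | h3
  · exact h3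
  exfalso
  obtain ⟨I, hI⟩ := hS s.1 h1 (by omega)
  set s' : ℤ × ℤ × (Fin k → ℤ) := (s.1, 0, fun i => if i ∈ I then 1 else 0) with hs'def
  set m : ℤ := ∑ i, (q i : ℤ) * s.2.2 i with hm
  have hsum : ∑ i, (q i : ℝ) * (s.2.2 i : ℝ) = (m : ℝ) := by
    rw [hm]; push_cast; ring
  have hsum' : ∑ i, (q i : ℝ) * ((s'.2.2 i : ℤ) : ℝ) = (s.1 : ℝ) := by
    have h0 : ∀ i, (q i : ℝ) * ((s'.2.2 i : ℤ) : ℝ) = if i ∈ I then (q i : ℝ) else 0 := by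
      intro i; simp only [hs'def]; split <;> simp
    simp_rw [h0, Finset.sum_ite_mem, Finset.univ_inter]
    exact_mod_cast congrArg (Int.cast : ℤ → ℝ) hI
  have hs' : inXZ k q R r s' := by
    refine ⟨h1, h2, Or.inl rfl, fun i => by simp only [hs'def]; split <;> simp, ?_⟩
    rw [hsum']
    simp [hs'def]
  -- strict gap
  have h5' : (1 / 2 : ℝ) + (m : ℝ) ≤ (s.1 : ℝ) := by
    rw [h3] at h5; rw [hsum] at h5; linarith
  have hint : (2 * m + 1 : ℤ) ≤ 2 * s.1 := by
    exact_mod_cast (by push_cast; linarith : ((2 * m + 1 : ℤ) : ℝ) ≤ ((2 * s.1 : ℤ) : ℝ))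
  have hgap : (0 : ℝ) < (s.1 : ℝ) - (1 / 2 + (m : ℝ)) := by
    have : m + 1 ≤ s.1 := by omega
    have : ((m : ℝ) + 1) ≤ (s.1 : ℝ) := by exact_mod_cast this
    linarith
  -- measurability / integrability
  have hgm : Measurable fun t : ℤ × ℝ => ((t.1 : ℤ) : ℝ) := by
    exact measurable_from_top.comp measurable_fst
  have hSmeas : MeasurableSet {t : ℤ × ℝ | inXW R r t} := by
    have : {t : ℤ × ℝ | inXW R r t}
        = Prod.fst ⁻¹' {z : ℤ | (R : ℤ) ≤ z ∧ z ≤ (R : ℤ) + 2 ^ r - 1} := rfl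
    rw [this]; exact measurable_fst (by trivial)
  have hcompl : σW {t | inXW R r t}ᶜ = 0 := by
    rw [prob_compl_eq_zero_iff hSmeas]; exact hsupp
  have hIntg : Integrable (fun t : ℤ × ℝ => ((t.1 : ℤ) : ℝ)) σW := by
    refine Integrable.mono' (integrable_const ((R : ℝ) + 2 ^ r))
      hgm.aestronglyMeasurable ?_
    rw [ae_iff]
    refine measure_mono_null ?_ hcompl
    intro t ht
    simp only [Set.mem_setOf_eq, not_le] at ht
    simp only [Set.mem_compl_iff, Set.mem_setOf_eq, inXW, not_and, not_le]
    intro ha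
    by_contra hb
    push_neg at hb
    have ha' : (R : ℝ) ≤ (t.1 : ℝ) := by exact_mod_cast ha
    have hb' : (t.1 : ℝ) ≤ (R : ℝ) + 2 ^ r - 1 := by exact_mod_cast hb
    have h2r : (0 : ℝ) ≤ 2 ^ r := by positivity
    have hRge : (0 : ℝ) ≤ (R : ℝ) := Nat.cast_nonneg R
    have : ‖((t.1 : ℤ) : ℝ)‖ ≤ (R : ℝ) + 2 ^ r := by
      rw [Real.norm_eq_abs, abs_le]; constructor <;> linarith
    linarith [lt_of_lt_of_le ht this]
  have hInt : Integrable (fun t => payZ k q Q s t) σW := by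
    have heq : (fun t : ℤ × ℝ => payZ k q Q s t) = fun t =>
        ((1 / 2 : ℝ) * (s.2.1 : ℝ) + ∑ i, (q i : ℝ) * (s.2.2 i : ℝ)
          - Q * (s.1 : ℝ) * (s.1 : ℝ)) + (2 * Q * (s.1 : ℝ)) * ((t.1 : ℤ) : ℝ) := by
      funext t; simp only [payZ]; ring
    rw [heq]
    exact (integrable_const _).add (hIntg.const_mul _)
  -- pointwise comparison
  have hpt : ∀ t, payZ k q Q s' t
      = payZ k q Q s t + ((s.1 : ℝ) - (1 / 2 + (m : ℝ))) := by
    intro t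
    simp only [payZ]
    rw [hsum', hsum, h3]
    have : (s'.1 : ℝ) = (s.1 : ℝ) := by simp [hs'def]
    rw [this]
    have : ((s'.2.1 : ℤ) : ℝ) = 0 := by simp [hs'def]
    rw [this]
    ring
  have hint_eq : (∫ t, payZ k q Q s' t ∂σW)
      = (∫ t, payZ k q Q s t ∂σW) + ((s.1 : ℝ) - (1 / 2 + (m : ℝ))) := by
    simp_rw [hpt]
    rw [integral_add hInt (integrable_const _), integral_const, probReal_univ,
      one_smul]
  have := hmax s' hs'
  rw [hint_eq] at this
  linarith
end
end

section
/- Let Q be a real number with Q > 1/2 + Σ_{i=1}^k q_i, and suppose that for every integer S with R ≤ S < R + 2^r there exists a subset I ⊆ {1, …, k} with Σ_{i∈I} q_i = S. Then the game has no Nash equilibrium in mixed strategies: there is no pair (σ_Z, σ_W) of Borel probability measures on X_Z and X_W, with Π_W integrable with respect to σ_Z ⊗ σ_W, such that ∫ Π_Z d(σ_Z ⊗ σ_W) ≥ ∫ Π_Z((z', z'_0, …, z'_k), ·) dσ_W for every pure strategy (z', z'_0, …, z'_k) ∈ X_Z and ∫ Π_W d(σ_Z ⊗ σ_W) ≥ ∫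 Π_W(·, (w', w'_0)) dσ_Z for every pure strategy (w', w'_0) ∈ X_W. -/
open MeasureTheory

noncomputable section

/-- A Nash equilibrium in mixed strategies: a pair of Borel probability
measures supported on `X_Z` and `X_W`, with `Π_W` integrable under their
product, such that each player's expected payoff is at least the expected
payoff of deviating to any pure strategy of their own. -/
def mixedNE (k : ℕ) (q : Fin k → ℕ) (R r : ℕ) (Q : ℝ)
    (σZ : Measure (ℤ × ℤ × (Fin k → ℤ))) (σW : Measure (ℤ × ℝ)) : Prop :=
  IsProbabilityMeasure σZ ∧ IsProbabilityMeasure σW ∧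
  σZ {s | inXZ k q R r s} = 1 ∧ σW {t | inXW R r t} = 1 ∧
  Integrable (fun p : (ℤ × ℤ × (Fin k → ℤ)) × (ℤ × ℝ) => payW k p.1 p.2) (σZ.prod σW) ∧
  (∀ s' : ℤ × ℤ × (Fin k → ℤ), inXZ k q R r s' →
    (∫ t, payZ k q Q s' t ∂σW) ≤ ∫ p, payZ k q Q p.1 p.2 ∂(σZ.prod σW)) ∧
  (∀ t' : ℤ × ℝ, inXW R r t' →
    (∫ s, payW k s t' ∂σZ) ≤ ∫ p, payW k p.1 p.2 ∂(σZ.prod σW))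

/-- Auxiliary: the best-response value function for player Z. -/
def Vfun (Q wbar : ℝ) (z : ℤ) : ℝ := (z : ℝ) + Q * (z : ℝ) * (2 * wbar - (z : ℝ))

set_option maxHeartbeats 1000000 in
/-- if `Q > 1/2 + Σᵢ qᵢ` and every integer `S` with
`R ≤ S < R + 2^r` is a subset sum of the `qᵢ`, the game has no Nash
equilibrium in mixed strategies. -/
theorem stmt8 (k : ℕ) (q : Fin k → ℕ) (R r : ℕ) (Q : ℝ)
    (hq : ∀ i, 0 < q i) (hR : 0 < R) (hr : 0 < r) (hrk : r ≤ k)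
    (hQ : Q > 1 / 2 + ∑ i, (q i : ℝ))
    (hS : ∀ S : ℤ, (R : ℤ) ≤ S → S < (R : ℤ) + 2 ^ r →
      ∃ I : Finset (Fin k), (∑ i ∈ I, (q i : ℤ)) = S) :
    ¬ ∃ (σZ : Measure (ℤ × ℤ × (Fin k → ℤ))) (σW : Measure (ℤ × ℝ)),
      mixedNE k q R r Q σZ σW := by
  rintro ⟨σZ, σW, hZP, hWP, hXZ, hXW, hIntW, hNEz, hNEw⟩
  have hpow : (1:ℤ) ≤ 2 ^ r := by
    have := pow_pos (show (0:ℤ) < 2 by norm_num) r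
    omega
  -- a.e. membership in the strategy sets
  have measZ : MeasurableSet {s | inXZ k q R r s} := .of_discrete
  have measW : MeasurableSet {t : ℤ × ℝ | inXW R r t} := by
    have : {t : ℤ × ℝ | inXW R r t}
        = Prod.fst ⁻¹' {z : ℤ | (R:ℤ) ≤ z ∧ z ≤ (R:ℤ) + 2 ^ r - 1} := rfl
    rw [this]
    exact measurable_fst .of_discrete
  have hZc : σZ {s | inXZ k q R r s}ᶜ = 0 := by
    have h := measure_compl measZ (measure_ne_top σZ _)
    rw [hXZ, measure_univ] at h
    simpa using h
  have hWc : σW {t : ℤ × ℝ | inXW R r t}ᶜ = 0 := by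
    have h := measure_compl measW (measure_ne_top σW _)
    rw [hXW, measure_univ] at h
    simpa using h
  have hZmem : ∀ᵐ s ∂σZ, inXZ k q R r s := by
    rw [ae_iff]
    rw [← Set.compl_setOf]
    exact hZc
  have hWmem : ∀ᵐ t ∂σW, inXW R r t := by
    rw [ae_iff]
    rw [← Set.compl_setOf]
    exact hWc
  ---------------------------------------------------------------------------
  -- Step 1: Player W forces z₀ = 1 almost surely
  ---------------------------------------------------------------------------
  set c : ℝ := ∫ s, (1 - ((s.2.1 : ℤ) : ℝ)) ∂σZ with hc
  have hmz0 : Measurable (fun s : ℤ × ℤ × (Fin k → ℤ) => (1 : ℝ) - ((s.2.1 : ℤ) : ℝ)) :=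
    .of_discrete
  have hintc : Integrable (fun s : ℤ × ℤ × (Fin k → ℤ) => (1 : ℝ) - ((s.2.1 : ℤ) : ℝ)) σZ := by
    refine Integrable.mono' (integrable_const (1:ℝ)) hmz0.aestronglyMeasurable ?_
    filter_upwards [hZmem] with s hs
    rcases hs.2.2.1 with h | h <;> simp [h]
  set VW : ℝ := ∫ p, payW k p.1 p.2 ∂(σZ.prod σW) with hVW
  have hWdev : ∀ w₀ : ℝ, c * w₀ ≤ VW := by
    intro w₀
    have hmem : inXW R r ((R:ℤ), w₀) := ⟨le_refl _, by omega⟩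
    have := hNEw ((R:ℤ), w₀) hmem
    have heq : (∫ s, payW k s ((R:ℤ), w₀) ∂σZ) = c * w₀ := by
      rw [hc, ← integral_mul_const]
      rfl
    linarith [heq ▸ this]
  have hcle : c ≤ 0 := by
    by_contra h
    push_neg at h
    have := hWdev ((VW + 1) / c)
    rw [mul_div_cancel₀ _ (ne_of_gt h)] at this
    linarith
  have hcge : 0 ≤ c := by
    refine integral_nonneg_of_ae ?_
    filter_upwards [hZmem] with s hs
    rcases hs.2.2.1 with h | h <;> simp [h]
  have hc0 : c = 0 := le_antisymm hcle hcge
  have hz1 : ∀ᵐ s ∂σZ, ((s.2.1 : ℤ) : ℝ) = 1 := by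
    have hae : (fun s : ℤ × ℤ × (Fin k → ℤ) => (1 : ℝ) - ((s.2.1 : ℤ) : ℝ)) =ᵐ[σZ] 0 := by
      refine (integral_eq_zero_iff_of_nonneg_ae ?_ hintc).mp hc0
      filter_upwards [hZmem] with s hs
      rcases hs.2.2.1 with h | h <;> simp [h]
    filter_upwards [hae] with s hs
    have : (1 : ℝ) - ((s.2.1 : ℤ) : ℝ) = 0 := hs
    linarith
  ---------------------------------------------------------------------------
  -- Step 2: Player Z has a profitable deviation
  ---------------------------------------------------------------------------
  set wbar : ℝ := ∫ t : ℤ × ℝ, ((t.1 : ℤ) : ℝ) ∂σW with hwbar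
  set M : ℝ := (R : ℝ) + 2 ^ r with hM
  have hM0 : (0:ℝ) < M := by positivity
  have hWbd : ∀ t : ℤ × ℝ, inXW R r t → |((t.1 : ℤ) : ℝ)| ≤ M := by
    rintro t ⟨h1, h2⟩
    rw [abs_le]
    constructor
    · have : (0:ℤ) ≤ t.1 := le_trans (by exact_mod_cast Nat.zero_le R) h1
      have : (0:ℝ) ≤ (t.1 : ℝ) := by exact_mod_cast this
      linarith
    · have : (t.1 : ℝ) ≤ (R : ℝ) + 2 ^ r - 1 := by exact_mod_cast h2
      push_cast at this ⊢
      linarith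
  have hintw : Integrable (fun t : ℤ × ℝ => ((t.1 : ℤ) : ℝ)) σW := by
    have hm : Measurable (fun t : ℤ × ℝ => ((t.1 : ℤ) : ℝ)) :=
      Measurable.of_discrete.comp measurable_fst
    refine Integrable.mono' (integrable_const M) hm.aestronglyMeasurable ?_
    filter_upwards [hWmem] with t ht
    simpa using hWbd t ht
  -- the key computation of integrals against σW
  have key : ∀ s : ℤ × ℤ × (Fin k → ℤ), (∫ t, payZ k q Q s t ∂σW)
      = (1 / 2 : ℝ) * (s.2.1 : ℝ) + ∑ i, (q i : ℝ) * (s.2.2 i : ℝ)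
        + Q * (s.1 : ℝ) * (2 * wbar - (s.1 : ℝ)) := by
    intro s
    have hfun : (fun t : ℤ × ℝ => payZ k q Q s t)
        = fun t : ℤ × ℝ =>
          ((1 / 2 : ℝ) * (s.2.1 : ℝ) + ∑ i, (q i : ℝ) * (s.2.2 i : ℝ)
            - Q * (s.1 : ℝ) * (s.1 : ℝ))
          + (2 * Q * (s.1 : ℝ)) * ((t.1 : ℤ) : ℝ) := by
      funext t
      simp only [payZ]
      ring
    rw [hfun, integral_add (integrable_const _) (hintw.const_mul _), integral_const,
      integral_const_mul]
    simp only [probReal_univ, ENNReal.toReal_one, one_smul]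
    rw [← hwbar]
    ring
  -- choose the maximizing pure strategy
  have hTne : (Finset.Icc (R:ℤ) ((R:ℤ) + 2 ^ r - 1)).Nonempty := by
    rw [Finset.nonempty_Icc]; omega
  obtain ⟨z', hz'T, hz'max⟩ := Finset.exists_max_image (Finset.Icc (R:ℤ) ((R:ℤ) + 2 ^ r - 1)) (Vfun Q wbar) hTne
  rw [Finset.mem_Icc] at hz'T
  obtain ⟨I, hI⟩ := hS z' hz'T.1 (by omega)
  set s' : ℤ × ℤ × (Fin k → ℤ) := (z', 0, fun i => if i ∈ I then 1 else 0) with hs'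
  have hsum : ∑ i, (q i : ℝ) * (((if i ∈ I then (1:ℤ) else 0) : ℤ) : ℝ) = (z' : ℝ) := by
    have : ∑ i, (q i : ℝ) * (((if i ∈ I then (1:ℤ) else 0) : ℤ) : ℝ)
        = ∑ i ∈ I, (q i : ℝ) := by
      rw [← Fintype.sum_ite_mem I (fun i => (q i : ℝ))]
      refine Finset.sum_congr rfl fun i _ => ?_
      by_cases h : i ∈ I <;> simp [h]
    rw [this]
    exact_mod_cast congrArg (Int.cast : ℤ → ℝ) hI
  have hs'X : inXZ k q R r s' := by
    refine ⟨hz'T.1, hz'T.2, Or.inl rfl, fun i => ?_, ?_⟩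
    · by_cases h : i ∈ I <;> simp [hs', h]
    · show (1 / 2 : ℝ) * ((0:ℤ) : ℝ) + _ ≤ _
      rw [hsum]
      simp [hs']
  -- the deviation payoff equals Vfun Q wbar z'
  have hdevval : (∫ t, payZ k q Q s' t ∂σW) = Vfun Q wbar z' := by
    rw [key s']
    show (1 / 2 : ℝ) * ((0:ℤ) : ℝ) + _ + _ = _
    rw [hsum]
    simp [Vfun, hs']
  -- integrability of payZ over the product
  have hZbd : ∀ s : ℤ × ℤ × (Fin k → ℤ), inXZ k q R r s → |((s.1 : ℤ) : ℝ)| ≤ M := by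
    rintro s ⟨h1, h2, _⟩
    rw [abs_le]
    constructor
    · have : (0:ℤ) ≤ s.1 := le_trans (by exact_mod_cast Nat.zero_le R) h1
      have : (0:ℝ) ≤ (s.1 : ℝ) := by exact_mod_cast this
      linarith
    · have : (s.1 : ℝ) ≤ (R : ℝ) + 2 ^ r - 1 := by exact_mod_cast h2
      push_cast at this ⊢
      linarith
  set C : ℝ := 1 / 2 + (∑ i, (q i : ℝ)) + |Q| * M * (3 * M) with hC
  have hmemprod : ∀ᵐ p ∂(σZ.prod σW), inXZ k q R r p.1 ∧ inXW R r p.2 := by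
    rw [ae_iff]
    have hsub : {p : (ℤ × ℤ × (Fin k → ℤ)) × (ℤ × ℝ) | ¬(inXZ k q R r p.1 ∧ inXW R r p.2)}
        ⊆ ({s | inXZ k q R r s}ᶜ ×ˢ (Set.univ : Set (ℤ × ℝ)))
          ∪ ((Set.univ : Set (ℤ × ℤ × (Fin k → ℤ))) ×ˢ {t : ℤ × ℝ | inXW R r t}ᶜ) := by
      intro p hp
      simp only [Set.mem_setOf_eq, not_and_or] at hp
      rcases hp with hp | hp
      · exact Or.inl ⟨hp, Set.mem_univ _⟩
      · exact Or.inr ⟨Set.mem_univ _, hp⟩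
    refine measure_mono_null hsub (measure_union_null ?_ ?_) <;>
      rw [Measure.prod_prod] <;> simp [hZc, hWc]
  have hIntZ : Integrable (fun p : (ℤ × ℤ × (Fin k → ℤ)) × (ℤ × ℝ) => payZ k q Q p.1 p.2)
      (σZ.prod σW) := by
    have hm : Measurable (fun p : (ℤ × ℤ × (Fin k → ℤ)) × (ℤ × ℝ) => payZ k q Q p.1 p.2) := by
      have h1 : Measurable (fun p : (ℤ × ℤ × (Fin k → ℤ)) × (ℤ × ℝ) =>
          (1 / 2 : ℝ) * (p.1.2.1 : ℝ) + ∑ i, (q i : ℝ) * (p.1.2.2 i : ℝ)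
            - Q * (p.1.1 : ℝ) * (p.1.1 : ℝ)) :=
        Measurable.comp (g := fun s : ℤ × ℤ × (Fin k → ℤ) =>
          (1 / 2 : ℝ) * (s.2.1 : ℝ) + ∑ i, (q i : ℝ) * (s.2.2 i : ℝ)
            - Q * (s.1 : ℝ) * (s.1 : ℝ)) .of_discrete measurable_fst
      have h2 : Measurable (fun p : (ℤ × ℤ × (Fin k → ℤ)) × (ℤ × ℝ) =>
          (2 * Q * (p.1.1 : ℝ)) * ((p.2.1 : ℤ) : ℝ)) := by
        refine Measurable.mul ?_ ?_
        · exact Measurable.comp (g := fun s : ℤ × ℤ × (Fin k → ℤ) => 2 * Q * (s.1 : ℝ))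
            .of_discrete measurable_fst
        · exact ((Measurable.of_discrete (f := fun z : ℤ => (z : ℝ))).comp
            measurable_fst).comp measurable_snd
      have heq : (fun p : (ℤ × ℤ × (Fin k → ℤ)) × (ℤ × ℝ) => payZ k q Q p.1 p.2)
          = fun p => ((1 / 2 : ℝ) * (p.1.2.1 : ℝ) + ∑ i, (q i : ℝ) * (p.1.2.2 i : ℝ)
            - Q * (p.1.1 : ℝ) * (p.1.1 : ℝ)) + (2 * Q * (p.1.1 : ℝ)) * ((p.2.1 : ℤ) : ℝ) := by
        funext p
        simp only [payZ]
        ring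
      rw [heq]
      exact h1.add h2
    refine Integrable.mono' (integrable_const C) hm.aestronglyMeasurable ?_
    filter_upwards [hmemprod] with p hp
    obtain ⟨hpZ, hpW⟩ := hp
    obtain ⟨h1, h2, h3, h4, h5⟩ := hpZ
    have hb1 : |(p.1.2.1 : ℝ)| ≤ 1 := by rcases h3 with h | h <;> simp [h]
    have hb2 : |∑ i, (q i : ℝ) * (p.1.2.2 i : ℝ)| ≤ ∑ i, (q i : ℝ) := by
      refine le_trans (Finset.abs_sum_le_sum_abs _ _) (Finset.sum_le_sum fun i _ => ?_)
      rcases h4 i with h | h <;> simp [h, abs_mul]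
    have hb3 : |(p.1.1 : ℝ)| ≤ M := hZbd p.1 ⟨h1, h2, h3, h4, h5⟩
    have hb4 : |((p.2.1 : ℤ) : ℝ)| ≤ M := hWbd p.2 hpW
    have hb5 : |2 * ((p.2.1 : ℤ) : ℝ) - (p.1.1 : ℝ)| ≤ 3 * M := by
      have := abs_sub (2 * ((p.2.1 : ℤ) : ℝ)) ((p.1.1 : ℝ))
      rw [abs_mul] at this
      simp only [abs_two] at this
      linarith [abs_sub_abs_le_abs_sub (2 * ((p.2.1 : ℤ) : ℝ)) ((p.1.1 : ℝ))]
    have hQb : |Q * (p.1.1 : ℝ) * (2 * ((p.2.1 : ℤ) : ℝ) - (p.1.1 : ℝ))| ≤ |Q| * M * (3 * M) := by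
      rw [abs_mul, abs_mul]
      exact mul_le_mul (mul_le_mul le_rfl hb3 (abs_nonneg _) (abs_nonneg _)) hb5
        (abs_nonneg _) (by positivity)
    show ‖payZ k q Q p.1 p.2‖ ≤ C
    rw [Real.norm_eq_abs]
    simp only [payZ]
    have h12 : |(1 / 2 : ℝ) * ((p.1.2.1 : ℤ) : ℝ)| ≤ 1 / 2 := by
      rw [abs_mul]
      have h2' : |(1 / 2 : ℝ)| = 1 / 2 := by norm_num
      rw [h2']
      linarith
    refine le_trans (abs_add_three _ _ _) ?_
    rw [hC]
    exact add_le_add_three h12 hb2 hQb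
  -- the equilibrium payoff is at most Vfun Q wbar z' - 1/2
  have hΦint : Integrable (fun s => ∫ t, payZ k q Q s t ∂σW) σZ :=
    hIntZ.integral_prod_left
  have hbound : ∀ᵐ s ∂σZ, (∫ t, payZ k q Q s t ∂σW) ≤ Vfun Q wbar z' - 1/2 := by
    filter_upwards [hZmem, hz1] with s hs h1
    obtain ⟨ha1, ha2, _, ha4, ha5⟩ := hs
    rw [key s]
    set n : ℤ := ∑ i, (q i : ℤ) * s.2.2 i with hn
    have hnr : ((n : ℤ) : ℝ) = ∑ i, (q i : ℝ) * (s.2.2 i : ℝ) := by push_cast [hn]; ring_nf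
    have hcon : (1/2 : ℝ) + (n : ℝ) ≤ (s.1 : ℝ) := by
      rw [hnr]; rw [h1] at ha5; linarith
    have hnlt : n < s.1 := by
      have : (n : ℝ) < (s.1 : ℝ) := by linarith
      exact_mod_cast this
    have hnle : (n : ℝ) ≤ (s.1 : ℝ) - 1 := by
      have h' : n ≤ s.1 - 1 := by omega
      exact_mod_cast h'
    have hVz : Vfun Q wbar s.1 ≤ Vfun Q wbar z' := hz'max s.1 (Finset.mem_Icc.mpr ⟨ha1, ha2⟩)
    rw [h1, ← hnr]
    have : (1/2 : ℝ) * 1 + (n : ℝ) + Q * (s.1 : ℝ) * (2 * wbar - (s.1 : ℝ))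
        ≤ Vfun Q wbar s.1 - 1/2 := by
      simp only [Vfun]
      linarith
    linarith
  have hEqle : (∫ p, payZ k q Q p.1 p.2 ∂(σZ.prod σW)) ≤ Vfun Q wbar z' - 1/2 := by
    rw [integral_prod _ hIntZ]
    calc (∫ s, ∫ t, payZ k q Q s t ∂σW ∂σZ)
        ≤ ∫ _, (Vfun Q wbar z' - 1/2) ∂σZ := integral_mono_ae hΦint (integrable_const _) hbound
      _ = Vfun Q wbar z' - 1/2 := by simp
  have := hNEz s' hs'X
  rw [hdevval] at this
  linarith
end
end

section
/- Let Q be a real number with Q > 1/2 + Σ_{i=1}^k q_i. The game has a Nash equilibrium (in mixed strategies, i.e., a pair of Borel probability measures on X_Z and X_W with Π_W integrable under their product, satisfying the equilibrium inequalities against all pure deviations) if and only if there exists an integer S with R ≤ S < R + 2^r such that no subset I ⊆ {1, …, k} satisfies Σ_{i∈I} q_i = S; moreover, when such S exists, there is an equilibrium in pure strategies. -/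
open MeasureTheory

noncomputable section

lemma sum_eq_filter (k : ℕ) (q : Fin k → ℕ) (v : Fin k → ℤ) (hv : ∀ i, v i = 0 ∨ v i = 1) :
    ∑ i, (q i : ℝ) * (v i : ℝ)
      = ((∑ i ∈ Finset.univ.filter (fun i => v i = 1), (q i : ℤ) : ℤ) : ℝ) := by
  push_cast
  rw [Finset.sum_filter]
  refine Finset.sum_congr rfl fun i _ => ?_
  rcases hv i with h | h <;> simp [h]

lemma sum_eq_ind (k : ℕ) (q : Fin k → ℕ) (I : Finset (Fin k)) :
    ∑ i, (q i : ℝ) * (((if i ∈ I then (1:ℤ) else 0) : ℤ) : ℝ)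
      = ((∑ i ∈ I, (q i : ℤ) : ℤ) : ℝ) := by
  push_cast
  simp only [mul_ite, mul_one, mul_zero]
  rw [Finset.sum_ite_mem, Finset.univ_inter]

lemma sub_sum_le (k : ℕ) (q : Fin k → ℕ) (J : Finset (Fin k)) :
    ((∑ i ∈ J, (q i : ℤ) : ℤ) : ℝ) ≤ ∑ i, (q i : ℝ) := by
  push_cast
  apply Finset.sum_le_sum_of_subset_of_nonneg (Finset.subset_univ J)
  intro i _ _; positivity

lemma pure_exists (k : ℕ) (q : Fin k → ℕ) (R r : ℕ) (Q : ℝ)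
    (hR : 0 < R) (hQ : Q > 1 / 2 + ∑ i, (q i : ℝ))
    (S : ℤ) (hS1 : (R : ℤ) ≤ S) (hS2 : S < (R : ℤ) + 2 ^ r)
    (hS3 : ¬ ∃ I : Finset (Fin k), (∑ i ∈ I, (q i : ℤ)) = S) :
    ∃ (s : ℤ × ℤ × (Fin k → ℤ)) (t : ℤ × ℝ), pureNE k q R r Q s t := by
  have hS0 : 1 ≤ S := le_trans (by exact_mod_cast hR) hS1
  -- maximal subset sum ≤ S - 1
  set F : Finset (Finset (Fin k)) :=
    Finset.univ.filter (fun I => (∑ i ∈ I, (q i : ℤ)) ≤ S - 1) with hF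
  have hne : F.Nonempty := ⟨∅, by simp [hF]; omega⟩
  obtain ⟨I₀, hI₀F, hI₀max⟩ := Finset.exists_max_image F (fun I => ∑ i ∈ I, (q i : ℤ)) hne
  set M : ℤ := ∑ i ∈ I₀, (q i : ℤ) with hM
  have hMle : M ≤ S - 1 := by
    have := Finset.mem_filter.1 hI₀F; exact this.2
  have hM0 : 0 ≤ M := by
    have := hI₀max ∅ (by simp [hF]; omega); simpa using this
  have hmax : ∀ J : Finset (Fin k), (∑ i ∈ J, (q i : ℤ)) ≤ S - 1 →
      (∑ i ∈ J, (q i : ℤ)) ≤ M := by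
    intro J hJ; exact hI₀max J (by simp [hF, hJ]; omega)
  refine ⟨(S, 1, fun i => if i ∈ I₀ then 1 else 0), (S, 0), ?_, ⟨hS1, by omega⟩, ?_, ?_⟩
  · refine ⟨hS1, by omega, Or.inr rfl, fun i => by dsimp only; split <;> simp, ?_⟩
    dsimp only
    rw [sum_eq_ind k q I₀]
    have : ((M : ℤ) : ℝ) ≤ (S : ℝ) - 1 := by exact_mod_cast hMle
    simp only [← hM]
    push_cast
    linarith
  · -- Z optimality
    rintro ⟨z', z₀', v⟩ ⟨hz1, hz2, hz0, hv, hcon⟩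
    simp only [payZ]
    dsimp only at hz1 hz2 hz0 hv hcon ⊢
    rw [sum_eq_ind k q I₀, sum_eq_filter k q v hv]
    rw [sum_eq_filter k q v hv] at hcon
    set T : ℤ := ∑ i ∈ Finset.univ.filter (fun i => v i = 1), (q i : ℤ) with hT
    have hTJ : T = ∑ i ∈ Finset.univ.filter (fun i => v i = 1), (q i : ℤ) := hT
    have hT0 : (0:ℝ) ≤ (T : ℝ) := by
      have : (0:ℤ) ≤ T := Finset.sum_nonneg fun i _ => by positivity
      exact_mod_cast this
    have hTtot : (T : ℝ) ≤ ∑ i, (q i : ℝ) := sub_sum_le k q _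
    have hz01 : (0:ℝ) ≤ (z₀' : ℝ) ∧ (z₀' : ℝ) ≤ 1 := by
      rcases hz0 with h | h <;> simp [h]
    have hMr : ((M:ℤ):ℝ) ≤ ((S:ℤ):ℝ) - 1 := by exact_mod_cast hMle
    have hM0r : (0:ℝ) ≤ ((M:ℤ):ℝ) := by exact_mod_cast hM0
    have h1c : ((1:ℤ):ℝ) = 1 := by norm_num
    by_cases hzS : z' = S
    · rw [hzS] at hcon ⊢
      have hTM : T ≤ M := by
        refine hmax _ ?_
        rw [← hTJ]
        rcases hz0 with h0 | h1
        · have hTS : T ≤ S := by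
            rw [h0] at hcon; push_cast at hcon
            have hr : ((T:ℤ):ℝ) ≤ ((S:ℤ):ℝ) := by linarith
            exact_mod_cast hr
          have hTne : T ≠ S := fun h => hS3 ⟨_, hTJ ▸ h⟩
          omega
        · rw [h1] at hcon; push_cast at hcon
          have hlt : ((T:ℤ):ℝ) < ((S:ℤ):ℝ) := by linarith
          have : T < S := by exact_mod_cast hlt
          omega
      have hTMr : ((T:ℤ):ℝ) ≤ ((M:ℤ):ℝ) := by exact_mod_cast hTM
      linarith [hz01.1, hz01.2]
    · have hd : (1:ℝ) ≤ ((S:ℝ) - (z':ℝ))^2 := by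
        have h1 : (1:ℤ) ≤ (S - z')^2 := by
          have hne0 : S - z' ≠ 0 := fun h => hzS (by omega)
          nlinarith [Int.one_le_abs hne0, sq_abs (S - z')]
        calc (1:ℝ) = ((1:ℤ):ℝ) := by norm_num
          _ ≤ (((S - z')^2 : ℤ) : ℝ) := by exact_mod_cast h1
          _ = ((S:ℝ) - (z':ℝ))^2 := by push_cast; ring
      have hQ0 : 0 < Q := by
        have : (0:ℝ) ≤ ∑ i, (q i : ℝ) := Finset.sum_nonneg fun i _ => by positivity
        linarith
      have key : Q * 1 ≤ Q * ((S:ℝ) - (z':ℝ))^2 :=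
        mul_le_mul_of_nonneg_left hd (le_of_lt hQ0)
      have hid : Q * (z':ℝ) * (2*(S:ℝ) - (z':ℝ))
          = Q * (S:ℝ)^2 - Q * ((S:ℝ) - (z':ℝ))^2 := by ring
      have hid2 : Q * (S:ℝ) * (2*(S:ℝ) - (S:ℝ)) = Q * (S:ℝ)^2 := by ring
      linarith [hz01.1, hz01.2, hM0r, key, hTtot, hid, hid2, hQ]
  · rintro ⟨w', w₀'⟩ _
    simp [payW]

lemma payW_measurable (k : ℕ) :
    Measurable (fun p : (ℤ × ℤ × (Fin k → ℤ)) × (ℤ × ℝ) => payW k p.1 p.2) := by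
  unfold payW
  exact ((measurable_of_countable (fun s : ℤ × ℤ × (Fin k → ℤ) => (1 - (s.2.1:ℝ)))).comp
    measurable_fst).mul (measurable_snd.snd)

lemma pure_to_mixed (k : ℕ) (q : Fin k → ℕ) (R r : ℕ) (Q : ℝ)
    (s : ℤ × ℤ × (Fin k → ℤ)) (t : ℤ × ℝ) (h : pureNE k q R r Q s t) :
    mixedNE k q R r Q (Measure.dirac s) (Measure.dirac t) := by
  obtain ⟨hsZ, htW, hZ, hW⟩ := h
  refine ⟨inferInstance, inferInstance, Measure.dirac_apply_of_mem hsZ,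
    Measure.dirac_apply_of_mem htW, ?_, ?_, ?_⟩
  · rw [Measure.dirac_prod_dirac]
    refine ⟨(payW_measurable k).aestronglyMeasurable,
      HasFiniteIntegral.of_bounded (C := ‖payW k s t‖) ?_⟩
    rw [ae_dirac_eq]
    exact Filter.eventually_pure.2 (le_refl _)
  · intro s' hs'
    rw [integral_dirac, Measure.dirac_prod_dirac, integral_dirac]
    exact hZ s' hs'
  · intro t' ht'
    rw [integral_dirac, Measure.dirac_prod_dirac, integral_dirac]
    exact hW t' ht'

set_option maxHeartbeats 1000000 in
lemma no_mixed (k : ℕ) (q : Fin k → ℕ) (R r : ℕ) (Q : ℝ)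
    (hR : 0 < R) (hQ : Q > 1 / 2 + ∑ i, (q i : ℝ))
    (hall : ∀ S : ℤ, (R : ℤ) ≤ S → S < (R : ℤ) + 2 ^ r →
      ∃ I : Finset (Fin k), (∑ i ∈ I, (q i : ℤ)) = S)
    (σZ : Measure (ℤ × ℤ × (Fin k → ℤ))) (σW : Measure (ℤ × ℝ))
    (hNE : mixedNE k q R r Q σZ σW) : False := by
  obtain ⟨hPZ, hPW, hXZ1, hXW1, hIntW, hBRZ, hBRW⟩ := hNE
  have hmeasXZ : MeasurableSet {s : ℤ × ℤ × (Fin k → ℤ) | inXZ k q R r s} :=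
    (Set.to_countable _).measurableSet
  have hmeasXW : MeasurableSet {t : ℤ × ℝ | inXW R r t} := by
    have : {t : ℤ × ℝ | inXW R r t}
        = Prod.fst ⁻¹' {z : ℤ | (R:ℤ) ≤ z ∧ z ≤ (R:ℤ) + 2^r - 1} := by
      ext t; rfl
    rw [this]
    exact measurable_fst ((Set.to_countable _).measurableSet)
  have h0Z : σZ ({s | inXZ k q R r s}ᶜ) = 0 := by
    rw [measure_compl hmeasXZ (measure_ne_top _ _), hXZ1, measure_univ, tsub_self]
  have h0W : σW ({t | inXW R r t}ᶜ) = 0 := by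
    rw [measure_compl hmeasXW (measure_ne_top _ _), hXW1, measure_univ, tsub_self]
  have haeXZ : ∀ᵐ s ∂σZ, inXZ k q R r s := by
    rw [ae_iff]; simpa [Set.compl_setOf] using h0Z
  have haeXW : ∀ᵐ t ∂σW, inXW R r t := by
    rw [ae_iff]; simpa [Set.compl_setOf] using h0W
  -- Step 1 : a.e. z₀ = 1
  set E : Set (ℤ × ℤ × (Fin k → ℤ)) := {s | inXZ k q R r s ∧ s.2.1 ≠ 1} with hE
  have hmeasE : MeasurableSet E := (Set.to_countable _).measurableSet
  have hint_n : ∀ n : ℕ, ∫ s, payW k s ((R:ℤ), (n:ℝ)) ∂σZ = (n:ℝ) * (σZ E).toReal := by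
    intro n
    have hcong : (fun s => payW k s ((R:ℤ),(n:ℝ)))
        =ᵐ[σZ] fun s => (n:ℝ) * E.indicator (fun _ => (1:ℝ)) s := by
      filter_upwards [haeXZ] with s hs
      by_cases hEm : s ∈ E
      · have hz0 : s.2.1 = 0 := by
          rcases hs.2.2.1 with h | h
          · exact h
          · exact absurd h hEm.2
        simp [payW, hz0, Set.indicator_of_mem hEm]
      · have hz1 : s.2.1 = 1 := by
          by_contra hne; exact hEm ⟨hs, hne⟩
        simp [payW, hz1, Set.indicator_of_notMem hEm]
    rw [integral_congr_ae hcong, integral_const_mul]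
    congr 1
    rw [integral_indicator hmeasE]
    simp [Measure.real_def]
  have hE0 : σZ E = 0 := by
    by_contra hne
    have hpos : 0 < (σZ E).toReal := ENNReal.toReal_pos hne (measure_ne_top _ _)
    have h2r : (0:ℤ) < 2^r := by positivity
    have hball : ∀ n : ℕ, (n:ℝ) * (σZ E).toReal ≤ ∫ p, payW k p.1 p.2 ∂(σZ.prod σW) := by
      intro n
      have hXWn : inXW R r ((R:ℤ), (n:ℝ)) := ⟨le_refl _, by omega⟩
      have := hBRW _ hXWn
      rwa [hint_n n] at this
    obtain ⟨n, hn⟩ := exists_nat_gt ((∫ p, payW k p.1 p.2 ∂(σZ.prod σW)) / (σZ E).toReal)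
    have h1 := hball n
    rw [div_lt_iff₀ hpos] at hn
    linarith
  have haeZ1 : ∀ᵐ s ∂σZ, inXZ k q R r s ∧ s.2.1 = 1 := by
    have h1 : ∀ᵐ s ∂σZ, s ∉ E := by
      have he : {s : ℤ × ℤ × (Fin k → ℤ) | ¬ s ∉ E} = E := by ext x; simp
      rw [ae_iff, he]; exact hE0
    filter_upwards [haeXZ, h1] with s hs hnE
    exact ⟨hs, by by_contra h; exact hnE ⟨hs, h⟩⟩
  -- Step 2 : integrability facts
  have h2rR : (0:ℝ) < 2^r := by positivity
  have hRR : (0:ℝ) ≤ (R:ℝ) := Nat.cast_nonneg R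
  have haeW' : ∀ᵐ t ∂σW, ‖((t.1 : ℤ) : ℝ)‖ ≤ (R:ℝ) + 2^r := by
    filter_upwards [haeXW] with t ht
    have hub : ((t.1:ℤ):ℝ) ≤ (R:ℝ) + 2^r - 1 := by exact_mod_cast ht.2
    have hlb : (R:ℝ) ≤ ((t.1:ℤ):ℝ) := by exact_mod_cast ht.1
    rw [Real.norm_eq_abs, abs_le]
    constructor <;> linarith
  have hIntw : Integrable (fun t : ℤ × ℝ => ((t.1:ℤ):ℝ)) σW :=
    ⟨((measurable_of_countable (fun z : ℤ => (z:ℝ))).comp measurable_fst).aestronglyMeasurable,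
      HasFiniteIntegral.of_bounded haeW'⟩
  set μw : ℝ := ∫ t, ((t.1:ℤ):ℝ) ∂σW with hμw
  have hmZ : Measurable (fun p : (ℤ × ℤ × (Fin k → ℤ)) × (ℤ × ℝ) => payZ k q Q p.1 p.2) := by
    unfold payZ
    have h1 : Measurable fun p : (ℤ × ℤ × (Fin k → ℤ)) × (ℤ × ℝ) =>
        (1/2 : ℝ)*(p.1.2.1:ℝ) + ∑ i, (q i:ℝ)*(p.1.2.2 i:ℝ) :=
      (measurable_of_countable (fun s : ℤ × ℤ × (Fin k → ℤ) =>
        (1/2 : ℝ)*(s.2.1:ℝ) + ∑ i, (q i:ℝ)*(s.2.2 i:ℝ))).comp measurable_fst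
    have h2 : Measurable fun p : (ℤ × ℤ × (Fin k → ℤ)) × (ℤ × ℝ) => (p.1.1 : ℝ) :=
      (measurable_of_countable (fun s : ℤ × ℤ × (Fin k → ℤ) => (s.1:ℝ))).comp measurable_fst
    have h3 : Measurable fun p : (ℤ × ℤ × (Fin k → ℤ)) × (ℤ × ℝ) => (p.2.1 : ℝ) :=
      (measurable_of_countable (fun z : ℤ => (z:ℝ))).comp (measurable_fst.comp measurable_snd)
    exact h1.add ((measurable_const.mul h2).mul ((measurable_const.mul h3).sub h2))
  have haeprodZ : ∀ᵐ p ∂(σZ.prod σW), inXZ k q R r p.1 := by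
    rw [ae_iff]
    have he : {p : (ℤ × ℤ × (Fin k → ℤ)) × (ℤ × ℝ) | ¬ inXZ k q R r p.1}
        = ({s | inXZ k q R r s}ᶜ) ×ˢ (Set.univ : Set (ℤ × ℝ)) := by
      ext p; simp [Set.mem_prod]
    rw [he, Measure.prod_prod, h0Z, zero_mul]
  have haeprodW : ∀ᵐ p ∂(σZ.prod σW), inXW R r p.2 := by
    rw [ae_iff]
    have he : {p : (ℤ × ℤ × (Fin k → ℤ)) × (ℤ × ℝ) | ¬ inXW R r p.2}
        = (Set.univ : Set (ℤ × ℤ × (Fin k → ℤ))) ×ˢ ({t | inXW R r t}ᶜ) := by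
      ext p; simp [Set.mem_prod]
    rw [he, Measure.prod_prod, h0W, mul_zero]
  have hIntZ : Integrable (fun p : (ℤ × ℤ × (Fin k → ℤ)) × (ℤ × ℝ) => payZ k q Q p.1 p.2)
      (σZ.prod σW) := by
    refine ⟨hmZ.aestronglyMeasurable, HasFiniteIntegral.of_bounded
      (C := (1/2 + ∑ i, (q i:ℝ)) + |Q| * ((R:ℝ)+2^r) * (3*((R:ℝ)+2^r))) ?_⟩
    filter_upwards [haeprodZ, haeprodW] with p h1 h2
    obtain ⟨ha1, ha2, ha0, hav, hacon⟩ := h1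
    obtain ⟨hb1, hb2⟩ := h2
    have hL0 : (0:ℝ) ≤ (1/2)*(p.1.2.1:ℝ) + ∑ i, (q i:ℝ)*(p.1.2.2 i:ℝ) := by
      have hz : (0:ℝ) ≤ (p.1.2.1:ℝ) := by rcases ha0 with h | h <;> simp [h]
      have hs : (0:ℝ) ≤ ∑ i, (q i:ℝ)*(p.1.2.2 i:ℝ) := by
        apply Finset.sum_nonneg; intro i _
        rcases hav i with h | h <;> simp [h]
      linarith
    have hL1 : (1/2)*(p.1.2.1:ℝ) + ∑ i, (q i:ℝ)*(p.1.2.2 i:ℝ) ≤ 1/2 + ∑ i, (q i:ℝ) := by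
      have hz : (p.1.2.1:ℝ) ≤ 1 := by rcases ha0 with h | h <;> simp [h]
      have hs : ∑ i, (q i:ℝ)*(p.1.2.2 i:ℝ) ≤ ∑ i, (q i:ℝ) := by
        apply Finset.sum_le_sum; intro i _
        rcases hav i with h | h <;> simp [h]
      linarith
    have hzB : |(p.1.1:ℝ)| ≤ (R:ℝ)+2^r := by
      have hub : ((p.1.1:ℤ):ℝ) ≤ (R:ℝ) + 2^r - 1 := by exact_mod_cast ha2
      have hlb : (R:ℝ) ≤ ((p.1.1:ℤ):ℝ) := by exact_mod_cast ha1
      rw [abs_le]; constructor <;> linarith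
    have hwB : |(p.2.1:ℝ)| ≤ (R:ℝ)+2^r := by
      have hub : ((p.2.1:ℤ):ℝ) ≤ (R:ℝ) + 2^r - 1 := by exact_mod_cast hb2
      have hlb : (R:ℝ) ≤ ((p.2.1:ℤ):ℝ) := by exact_mod_cast hb1
      rw [abs_le]; constructor <;> linarith
    have h2wz : |2*(p.2.1:ℝ) - (p.1.1:ℝ)| ≤ 3*((R:ℝ)+2^r) := by
      have := abs_sub (2*(p.2.1:ℝ)) ((p.1.1:ℝ))
      rw [abs_mul] at this
      have h2 : |(2:ℝ)| = 2 := by norm_num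
      rw [h2] at this
      linarith
    rw [Real.norm_eq_abs, payZ]
    refine (abs_add_le _ _).trans ?_
    have e1 : |(1/2)*(p.1.2.1:ℝ) + ∑ i, (q i:ℝ)*(p.1.2.2 i:ℝ)| ≤ 1/2 + ∑ i, (q i:ℝ) :=
      abs_le.2 ⟨by linarith, hL1⟩
    have e2 : |Q * (p.1.1:ℝ) * (2*(p.2.1:ℝ) - (p.1.1:ℝ))| ≤ |Q| * ((R:ℝ)+2^r) * (3*((R:ℝ)+2^r)) := by
      rw [abs_mul, abs_mul]
      have hQn : (0:ℝ) ≤ |Q| := abs_nonneg Q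
      have h1 : |Q| * |(p.1.1:ℝ)| ≤ |Q| * ((R:ℝ)+2^r) :=
        mul_le_mul_of_nonneg_left hzB hQn
      refine mul_le_mul h1 h2wz (abs_nonneg _) (by positivity)
    linarith
  -- inner integral
  have hinner : ∀ s : ℤ × ℤ × (Fin k → ℤ), ∫ t, payZ k q Q s t ∂σW
      = ((1/2)*(s.2.1:ℝ) + ∑ i, (q i:ℝ)*(s.2.2 i:ℝ)) + Q * (s.1:ℝ) * (2*μw - (s.1:ℝ)) := by
    intro s
    have hfun : (fun t : ℤ × ℝ => payZ k q Q s t)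
        = fun t => ((((1/2):ℝ)*(s.2.1:ℝ) + ∑ i, (q i:ℝ)*(s.2.2 i:ℝ)) - Q*(s.1:ℝ)*(s.1:ℝ))
          + (Q*(s.1:ℝ)*2) * ((t.1:ℤ):ℝ) := by
      funext t; simp only [payZ]; ring
    rw [hfun, integral_add (integrable_const _) (hIntw.const_mul _), integral_const,
      integral_const_mul, ← hμw]
    simp [measure_univ]
    ring
  have hmain : ∫ p, payZ k q Q p.1 p.2 ∂(σZ.prod σW)
      = ∫ s, (((1/2)*(s.2.1:ℝ) + ∑ i, (q i:ℝ)*(s.2.2 i:ℝ))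
          + Q * (s.1:ℝ) * (2*μw - (s.1:ℝ))) ∂σZ := by
    rw [integral_prod _ hIntZ]
    exact integral_congr_ae (Filter.Eventually.of_forall fun s => hinner s)
  have hIntF : Integrable (fun s : ℤ × ℤ × (Fin k → ℤ) =>
      (((1/2)*(s.2.1:ℝ) + ∑ i, (q i:ℝ)*(s.2.2 i:ℝ)) + Q * (s.1:ℝ) * (2*μw - (s.1:ℝ)))) σZ := by
    have h := hIntZ.integral_prod_left
    rwa [show (fun x : ℤ × ℤ × (Fin k → ℤ) => ∫ y, payZ k q Q x y ∂σW)
        = fun s : ℤ × ℤ × (Fin k → ℤ) => (((1/2)*(s.2.1:ℝ) + ∑ i, (q i:ℝ)*(s.2.2 i:ℝ))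
          + Q * (s.1:ℝ) * (2*μw - (s.1:ℝ))) from funext hinner] at h
  -- the maximizing z*
  have h2r : (0:ℤ) < 2^r := by positivity
  have hTne : (Finset.Icc (R:ℤ) ((R:ℤ)+2^r-1)).Nonempty :=
    ⟨(R:ℤ), Finset.mem_Icc.2 ⟨le_refl _, by omega⟩⟩
  obtain ⟨zs, hzsmem, hzsmax⟩ := Finset.exists_max_image (Finset.Icc (R:ℤ) ((R:ℤ)+2^r-1))
    (fun z : ℤ => (z:ℝ) + Q*(z:ℝ)*(2*μw - (z:ℝ))) hTne
  obtain ⟨hzs1, hzs2⟩ := Finset.mem_Icc.1 hzsmem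
  obtain ⟨I, hI⟩ := hall zs hzs1 (by omega)
  have hs'X : inXZ k q R r (zs, 0, fun i => if i ∈ I then 1 else 0) := by
    refine ⟨hzs1, hzs2, Or.inl rfl, fun i => by dsimp only; split <;> simp, ?_⟩
    dsimp only
    rw [sum_eq_ind k q I, hI]
    norm_num
  have hLHS : ∫ t, payZ k q Q (zs, 0, fun i => if i ∈ I then 1 else 0) t ∂σW
      = (zs:ℝ) + Q*(zs:ℝ)*(2*μw - (zs:ℝ)) := by
    rw [hinner]
    dsimp only
    rw [sum_eq_ind k q I, hI]
    push_cast
    ring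
  have hbound : ∀ᵐ s ∂σZ, (((1/2)*(s.2.1:ℝ) + ∑ i, (q i:ℝ)*(s.2.2 i:ℝ))
      + Q * (s.1:ℝ) * (2*μw - (s.1:ℝ)))
      ≤ ((zs:ℝ) + Q*(zs:ℝ)*(2*μw - (zs:ℝ))) - 1/2 := by
    filter_upwards [haeZ1] with s hs
    obtain ⟨⟨h1, h2, _, hv, hcon⟩, hz1⟩ := hs
    rw [sum_eq_filter k q s.2.2 hv] at hcon ⊢
    rw [hz1] at hcon ⊢
    have h1c : ((1:ℤ):ℝ) = 1 := by norm_num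
    set T : ℤ := ∑ i ∈ Finset.univ.filter (fun i => s.2.2 i = 1), (q i : ℤ) with hT
    have hTle : T ≤ s.1 - 1 := by
      have hlt : ((T:ℤ):ℝ) < ((s.1:ℤ):ℝ) := by linarith
      have : T < s.1 := by exact_mod_cast hlt
      omega
    have hTler : ((T:ℤ):ℝ) ≤ (s.1:ℝ) - 1 := by exact_mod_cast hTle
    have hpsi : (s.1:ℝ) + Q*(s.1:ℝ)*(2*μw - (s.1:ℝ)) ≤ (zs:ℝ) + Q*(zs:ℝ)*(2*μw - (zs:ℝ)) :=
      hzsmax s.1 (Finset.mem_Icc.2 ⟨h1, h2⟩)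
    linarith [h1c]
  have hRHS : ∫ s, (((1/2)*(s.2.1:ℝ) + ∑ i, (q i:ℝ)*(s.2.2 i:ℝ))
      + Q * (s.1:ℝ) * (2*μw - (s.1:ℝ))) ∂σZ
      ≤ ((zs:ℝ) + Q*(zs:ℝ)*(2*μw - (zs:ℝ))) - 1/2 := by
    have h := integral_mono_ae hIntF (integrable_const _) hbound
    simpa [measure_univ] using h
  have hfin := hBRZ _ hs'X
  rw [hLHS, hmain] at hfin
  linarith

/-- for `Q > 1/2 + Σᵢ qᵢ`, the game has a Nash equilibrium in
mixed strategies iff some integer `S` with `R ≤ S < R + 2^r` is not a subset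
sum of the `qᵢ`; moreover, when such an `S` exists there is an equilibrium in
pure strategies. -/
theorem stmt9 (k : ℕ) (q : Fin k → ℕ) (R r : ℕ) (Q : ℝ)
    (hq : ∀ i, 0 < q i) (hR : 0 < R) (hr : 0 < r) (hrk : r ≤ k)
    (hQ : Q > 1 / 2 + ∑ i, (q i : ℝ)) :
    ((∃ (σZ : Measure (ℤ × ℤ × (Fin k → ℤ))) (σW : Measure (ℤ × ℝ)),
        mixedNE k q R r Q σZ σW) ↔
      (∃ S : ℤ, (R : ℤ) ≤ S ∧ S < (R : ℤ) + 2 ^ r ∧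
        ¬ ∃ I : Finset (Fin k), (∑ i ∈ I, (q i : ℤ)) = S)) ∧
    ((∃ S : ℤ, (R : ℤ) ≤ S ∧ S < (R : ℤ) + 2 ^ r ∧
        ¬ ∃ I : Finset (Fin k), (∑ i ∈ I, (q i : ℤ)) = S) →
      ∃ (s : ℤ × ℤ × (Fin k → ℤ)) (t : ℤ × ℝ), pureNE k q R r Q s t) := by
  have main : (∃ S : ℤ, (R : ℤ) ≤ S ∧ S < (R : ℤ) + 2 ^ r ∧
      ¬ ∃ I : Finset (Fin k), (∑ i ∈ I, (q i : ℤ)) = S) →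
      ∃ (s : ℤ × ℤ × (Fin k → ℤ)) (t : ℤ × ℝ), pureNE k q R r Q s t := by
    rintro ⟨S, h1, h2, h3⟩
    exact pure_exists k q R r Q hR hQ S h1 h2 h3
  refine ⟨⟨?_, ?_⟩, main⟩
  · rintro ⟨σZ, σW, hNE⟩
    by_contra hno
    push_neg at hno
    exact no_mixed k q R r Q hR hQ hno σZ σW hNE
  · intro hS
    obtain ⟨s, t, hp⟩ := main hS
    exact ⟨_, _, pure_to_mixed k q R r Q s t hp⟩
end
end
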